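/- Let m and n be positive integers, and let a, b be natural numbers with a ≤ m and b ≤ n. Let τ be a real number with τ > 0, and set Δ := a/m − b/n (as a real number). Assume Δ ≥ τ, and let k := ⌈n·(Δ − τ)⌉ (the ceiling, a natural number). Then k ≤ n − b and a/m − (b + k)/n ≤ τ. -/
import Mathlib

/-- Correctness of the MData discrimination-removal step: with risk difference
`Δ = a/m − b/n ≥ τ > 0` and `k = ⌈n·(Δ − τ)⌉`, there are enough protected-group
tuples with negative decision to flip (`k ≤ n − b`), and after flipping the risk
difference is at most `τ`. -/
theorem mdata_flip_correct (m n : ℕ) (hm : 0 < m) (hn : 0 < n)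
    (a b : ℕ) (ha : a ≤ m) (hb : b ≤ n)
    (τ : ℝ) (hτ : 0 < τ)
    (Δ : ℝ) (hΔdef : Δ = (a : ℝ) / m - (b : ℝ) / n) (hΔ : Δ ≥ τ)
    (k : ℕ) (hk : k = ⌈(n : ℝ) * (Δ - τ)⌉₊) :
    k ≤ n - b ∧ (a : ℝ) / m - ((b : ℝ) + (k : ℝ)) / n ≤ τ := by
  have hn' : (0:ℝ) < n := by exact_mod_cast hn
  have hm' : (0:ℝ) < m := by exact_mod_cast hm
  have ham : (a:ℝ)/m ≤ 1 := by
    rw [div_le_one hm']; exact_mod_cast ha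
  have hbound : (n:ℝ) * (Δ - τ) ≤ ((n - b : ℕ) : ℝ) := by
    have hcast : ((n - b : ℕ) : ℝ) = (n:ℝ) - b := by
      push_cast [Nat.cast_sub hb]; ring
    rw [hcast, hΔdef]
    have : (n:ℝ) * ((a:ℝ)/m - (b:ℝ)/n) = (n:ℝ) * ((a:ℝ)/m) - b := by
      field_simp
    nlinarith [mul_le_of_le_one_right hn'.le ham]
  constructor
  · rw [hk]
    exact Nat.ceil_le.2 hbound
  · have hkge : (n:ℝ) * (Δ - τ) ≤ (k:ℝ) := by
      rw [hk]; exact Nat.le_ceil _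
    have hΔeq : (a:ℝ)/m = Δ + (b:ℝ)/n := by rw [hΔdef]; ring
    rw [hΔeq, add_div]
    have : (k:ℝ)/n ≥ Δ - τ := by
      rw [ge_iff_le, le_div_iff₀ hn']
      linarith [hkge]
    linarith
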